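/- Let R be a commutative ring and M ≥ 1. For any share vectors u, v and any two Beaver triples T and T', the reconstruction of the Beaver multiplication of u and v using T equals the reconstruction of the Beaver multiplication of v and u using T', and both equal (Σu)·(Σv). In particular, secret-shared multiplication satisfies the commutative law at the level of reconstructed values. -/
import Mathlib

/-- Reconstruction of a share vector: the sum of its entries. -/
def recon {R : Type*} [CommRing R] {M : ℕ} (u : Fin M → R) : R :=
  ∑ m, u m

/-- Beaver multiplication of share vectors `u` and `v` using the triple `(α, β, γ)`. -/
def beaverMul {R : Type*} [CommRing R] {M : ℕ} [NeZero M]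
    (u v α β γ : Fin M → R) : Fin M → R := fun m =>
  let e : R := ∑ i, (u i - α i)
  let f : R := ∑ i, (v i - β i)
  if m = (0 : Fin M) then e * f + f * α m + e * β m + γ m
  else f * α m + e * β m + γ m

lemma beaver_correct {R : Type*} [CommRing R] {M : ℕ} [NeZero M]
    (u v α β γ : Fin M → R) (hT : recon γ = recon α * recon β) :
    recon (beaverMul u v α β γ) = recon u * recon v := by
  classical
  set e : R := ∑ i, (u i - α i) with he
  set f : R := ∑ i, (v i - β i) with hf
  have h : recon (beaverMul u v α β γ)
      = e * f + f * recon α + e * recon β + recon γ := by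
    unfold recon beaverMul
    rw [show (∑ m : Fin M, if m = (0:Fin M) then e * f + f * α m + e * β m + γ m
        else f * α m + e * β m + γ m)
      = ∑ m : Fin M, ((if m = (0:Fin M) then e * f else 0) + (f * α m + e * β m + γ m))
      from Finset.sum_congr rfl (by intro m _; split <;> ring)]
    rw [Finset.sum_add_distrib, Finset.sum_ite_eq' Finset.univ (0 : Fin M)
      (fun _ => e * f)]
    simp [Finset.mul_sum, Finset.sum_add_distrib]; ring
  have he' : e = recon u - recon α := by
    simp [he, recon, Finset.sum_sub_distrib]
  have hf' : f = recon v - recon β := by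
    simp [hf, recon, Finset.sum_sub_distrib]
  rw [h, he', hf', hT]; ring

/-- secret-shared multiplication is commutative at the level of
reconstructed values, for any two valid Beaver triples. -/
theorem beaverMul_comm {R : Type*} [CommRing R] {M : ℕ} [NeZero M]
    (u v α β γ α' β' γ' : Fin M → R)
    (hT : recon γ = recon α * recon β)
    (hT' : recon γ' = recon α' * recon β') :
    recon (beaverMul u v α β γ) = recon (beaverMul v u α' β' γ') ∧
    recon (beaverMul u v α β γ) = recon u * recon v := by
  have h1 := beaver_correct u v α β γ hT
  have h2 := beaver_correct v u α' β' γ' hT'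
  exact ⟨by rw [h1, h2, mul_comm], h1⟩
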